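/- With F_{μ,λ} as in the context, F_{μ,λ} commutes with the action of E: for all k ≥ 1, applying E (acting on M(μ)⊗M(λ) by E(v_i⊗v_j) = q^{λ-2j}[i]v_{i-1}⊗v_j + [j]v_i⊗v_{j-1}) to F_{μ,λ}(v_k) equals [k]·F_{μ,λ}(v_{k-1}). Equivalently, for 0 ≤ j ≤ k−1: q^{-(k-j-1)(μ-j-1)}[k choose j+1]_q (∏_{i=0}^{j}[μ-i] ∏_{i=0}^{k-j-2}[λ-i]) q^{λ-2(k-1-j)}[j+1] + q^{-(k-j)(μ-j)}[k choose j]_q (∏_{i=0}^{j-1}[μ-i] ∏_{i=0}^{k-j-1}[λ-i])[k-j] = [k] [μ+λ-k+1] q^{-(k-1-j)(μ-j)} [k-1 choose j]_q (∏_{i=0}^{j-1}[μ-i] ∏_{i=0}^{k-j-2}[λ-i]). -/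

import Mathlib

/-! Compare coefficients of `v_j ⊗ v_{k-1-j}`. The q-binomial recursions
`[j+1][k choose j+1] = [k][k-1 choose j] = [k-j][k choose j]` pull out the factor `[k]`, and
what is left is the q-number addition rule
`[μ+λ-k+1] = q^{λ-(k-1-j)}[μ-j] + q^{-(μ-j)}[λ-(k-1-j)]`,
which cancels the last factor of `∏_{i<k}[μ+λ-i]`. -/

open Finset

noncomputable section

variable {K : Type*} [Field K]

def qnum (q : K) (m : ℕ) : K := (q ^ m - q⁻¹ ^ m) / (q - q⁻¹)

def qfact (q : K) : ℕ → K
  | 0 => 1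
  | m + 1 => qnum q (m + 1) * qfact q m

def qbinom (q : K) (m l : ℕ) : K :=
  if l ≤ m then qfact q m / (qfact q l * qfact q (m - l)) else 0

def gq (q x : K) : K := (x - x⁻¹) / (q - q⁻¹)

/-- Coefficient of `v_j ⊗ v_{k-j}` in `F_{μ,λ}(v_k)`:
`q^{-(k-j)(μ-j)} [k choose j] ∏_{i<j}[μ-i] ∏_{i<k-j}[λ-i] / ∏_{i<k}[μ+λ-i]`,
with `a = q^μ`, `b = q^λ`, `q^{-(k-j)(μ-j)} = a^{-(k-j)} q^{(k-j)j}`. -/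
def Fcoef (q a b : K) (k j : ℕ) : K :=
  a⁻¹ ^ (k - j) * q ^ ((k - j) * j) * qbinom q k j
    * ((∏ i ∈ range j, gq q (a * q⁻¹ ^ i)) * (∏ i ∈ range (k - j), gq q (b * q⁻¹ ^ i))
        / ∏ i ∈ range k, gq q (a * b * q⁻¹ ^ i))

/-- `F_{μ,λ} : M(μ+λ) → M(μ) ⊗ M(λ)`. -/
def Fml (q a b : K) : (ℕ →₀ K) →ₗ[K] ((ℕ × ℕ) →₀ K) :=
  Finsupp.lift ((ℕ × ℕ) →₀ K) K ℕ fun k =>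
    ∑ j ∈ range (k + 1), Finsupp.single (j, k - j) (Fcoef q a b k j)

/-- `E` acting on `M(μ)⊗M(λ)`:
`E(v_i⊗v_j) = q^{λ-2j}[i] v_{i-1}⊗v_j + [j] v_i⊗v_{j-1}` (note `[0] = 0`). -/
def Etens (q b : K) : ((ℕ × ℕ) →₀ K) →ₗ[K] ((ℕ × ℕ) →₀ K) :=
  Finsupp.lift ((ℕ × ℕ) →₀ K) K (ℕ × ℕ) fun p =>
    Finsupp.single (p.1 - 1, p.2) (b * q⁻¹ ^ (2 * p.2) * qnum q p.1)
      + Finsupp.single (p.1, p.2 - 1) (qnum q p.2)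

lemma qnum_zero (q : K) : qnum q 0 = 0 := by simp [qnum]

lemma qfact_succ (q : K) (n : ℕ) : qfact q (n + 1) = qnum q (n + 1) * qfact q n := rfl

lemma qfact_dvd_qfact (q : K) {m n : ℕ} (h : m ≤ n) : qfact q m ∣ qfact q n := by
  induction n, h using Nat.le_induction with
  | base => rfl
  | succ n _ ih => exact Dvd.dvd.mul_left ih _

lemma qbinom_of_le (q : K) {m l : ℕ} (h : l ≤ m) :
    qbinom q m l = qfact q m / (qfact q l * qfact q (m - l)) :=
  if_pos h

lemma qbinom_add_comm (q : K) (j m : ℕ) : qbinom q (j + m) j = qbinom q (j + m) m := by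
  rw [qbinom_of_le q (Nat.le_add_right j m), qbinom_of_le q (Nat.le_add_left m j),
    add_tsub_cancel_left, add_tsub_cancel_right, mul_comm]

lemma qnum_succ_mul_qbinom_succ_succ (q : K) (j m : ℕ) :
    qnum q (j + 1) * qbinom q (j + m + 1) (j + 1)
      = qnum q (j + m + 1) * qbinom q (j + m) j := by
  rw [qbinom_of_le q (by omega : j + 1 ≤ j + m + 1), qbinom_of_le q (Nat.le_add_right j m),
    show j + m + 1 - (j + 1) = m by omega, add_tsub_cancel_left, mul_div_assoc', mul_div_assoc',
    ← qfact_succ]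
  by_cases hj : qfact q (j + 1) = 0
  · have hjm : qfact q (j + m + 1) = 0 := zero_dvd_iff.mp (hj ▸ qfact_dvd_qfact q (by omega))
    simp [hj, hjm]
  · have hqnum : qnum q (j + 1) ≠ 0 := left_ne_zero_of_mul hj
    rw [qfact_succ q j, mul_assoc]
    exact mul_div_mul_left _ _ hqnum

lemma qnum_succ_mul_qbinom_succ (q : K) (j m : ℕ) :
    qnum q (m + 1) * qbinom q (j + m + 1) j = qnum q (j + m + 1) * qbinom q (j + m) j := by
  rw [add_assoc, qbinom_add_comm, qbinom_add_comm q j m, ← add_assoc, add_comm j m,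
    qnum_succ_mul_qbinom_succ_succ]

lemma gq_mul (q x y : K) : gq q (x * y) = y * gq q x + x⁻¹ * gq q y := by
  simp only [gq, mul_inv]
  ring

/-- The q-falling factorial `∏_{i<n} [ν - i]`, written through `x = q^ν`. -/
def qfall (q x : K) (n : ℕ) : K := ∏ i ∈ range n, gq q (x * q⁻¹ ^ i)

lemma qfall_succ (q x : K) (n : ℕ) : qfall q x (n + 1) = qfall q x n * gq q (x * q⁻¹ ^ n) :=
  prod_range_succ _ _

lemma Fcoef_add (q a b : K) (j m : ℕ) :
    Fcoef q a b (j + m) j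
      = a⁻¹ ^ m * q ^ (m * j) * qbinom q (j + m) j
        * (qfall q a j * qfall q b m / qfall q (a * b) (j + m)) := by
  rw [Fcoef, Nat.add_sub_cancel_left]
  rfl

lemma Fcoef_add_succ (q a b : K) (j m : ℕ) :
    Fcoef q a b (j + m + 1) j
      = a⁻¹ ^ (m + 1) * q ^ ((m + 1) * j) * qbinom q (j + m + 1) j
        * (qfall q a j * qfall q b (m + 1) / qfall q (a * b) (j + m + 1)) := by
  rw [add_assoc, Fcoef_add]

lemma Fcoef_add_succ_succ (q a b : K) (j m : ℕ) :
    Fcoef q a b (j + m + 1) (j + 1)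
      = a⁻¹ ^ m * q ^ (m * (j + 1)) * qbinom q (j + m + 1) (j + 1)
        * (qfall q a (j + 1) * qfall q b m / qfall q (a * b) (j + m + 1)) := by
  rw [add_right_comm, Fcoef_add]

lemma Fcoef_succ_mul_add_Fcoef_mul (q a b : K) (hq : q ≠ 0) (j m : ℕ)
    (hG : gq q (a * b * q⁻¹ ^ (j + m)) ≠ 0) :
    Fcoef q a b (j + m + 1) (j + 1) * (b * q⁻¹ ^ (2 * m) * qnum q (j + 1))
      + Fcoef q a b (j + m + 1) j * qnum q (m + 1)
      = qnum q (j + m + 1) * Fcoef q a b (j + m) j := by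
  have hG_split : gq q (a * b * q⁻¹ ^ (j + m))
      = b * q⁻¹ ^ m * gq q (a * q⁻¹ ^ j) + a⁻¹ * q ^ j * gq q (b * q⁻¹ ^ m) := by
    rw [show a * b * q⁻¹ ^ (j + m) = a * q⁻¹ ^ j * (b * q⁻¹ ^ m) by ring, gq_mul]
    simp only [mul_inv, inv_pow, inv_inv]
  rw [Fcoef_add_succ_succ, Fcoef_add_succ, Fcoef_add, qfall_succ, qfall_succ, qfall_succ]
  set P := qfall q a j
  set R := qfall q b m
  set Q := qfall q (a * b) (j + m)
  set g₁ := gq q (a * q⁻¹ ^ j)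
  set g₂ := gq q (b * q⁻¹ ^ m)
  set G := gq q (a * b * q⁻¹ ^ (j + m))
  set N := qnum q (j + m + 1)
  set C := qbinom q (j + m) j
  have hqm : q ^ m * q⁻¹ ^ m = 1 := by rw [← mul_pow, mul_inv_cancel₀ hq, one_pow]
  have h₁ := qnum_succ_mul_qbinom_succ_succ q j m
  have h₂ := qnum_succ_mul_qbinom_succ q j m
  calc _ = (qnum q (j + 1) * qbinom q (j + m + 1) (j + 1))
          * (b * q⁻¹ ^ (2 * m) * a⁻¹ ^ m * q ^ (m * (j + 1)) * (P * g₁ * R / (Q * G)))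
        + (qnum q (m + 1) * qbinom q (j + m + 1) j)
          * (a⁻¹ ^ (m + 1) * q ^ ((m + 1) * j) * (P * (R * g₂) / (Q * G))) := by ring
    _ = N * C * (a⁻¹ ^ m * q ^ (m * j)
          * (P * R * (b * q⁻¹ ^ m * g₁ + a⁻¹ * q ^ j * g₂) / (Q * G))) := by
        rw [h₁, h₂]
        linear_combination
          N * C * a⁻¹ ^ m * q ^ (m * j) * P * R * g₁ * b * q⁻¹ ^ m / (Q * G) * hqm
    _ = N * (a⁻¹ ^ m * q ^ (m * j) * C * (P * R / Q)) := by
        rw [← hG_split, mul_div_mul_right _ _ hG]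
        ring

lemma Fml_single (q a b : K) (k : ℕ) :
    Fml q a b (Finsupp.single k 1)
      = ∑ j ∈ range (k + 1), Finsupp.single (j, k - j) (Fcoef q a b k j) := by
  simp [Fml, Finsupp.lift_apply, Finsupp.sum_single_index]

lemma Etens_single (q b : K) (p : ℕ × ℕ) (c : K) :
    Etens q b (Finsupp.single p c)
      = Finsupp.single (p.1 - 1, p.2) (c * (b * q⁻¹ ^ (2 * p.2) * qnum q p.1))
        + Finsupp.single (p.1, p.2 - 1) (c * qnum q p.2) := by
  rw [Etens, Finsupp.lift_apply, Finsupp.sum_single_index (by simp), smul_add,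
    Finsupp.smul_single, Finsupp.smul_single, smul_eq_mul, smul_eq_mul]

lemma Etens_Fml_single_succ (q a b : K) (n : ℕ) :
    Etens q b (Fml q a b (Finsupp.single (n + 1) 1))
      = ∑ j ∈ range (n + 1), Finsupp.single (j, n - j)
          (Fcoef q a b (n + 1) (j + 1) * (b * q⁻¹ ^ (2 * (n - j)) * qnum q (j + 1))
            + Fcoef q a b (n + 1) j * qnum q (n + 1 - j)) := by
  rw [Fml_single, map_sum]
  simp only [Etens_single]
  -- the `E v_i ⊗ v_j` parts vanish for `i = 0`, the `v_i ⊗ E v_j` parts for `j = 0`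
  rw [sum_add_distrib, sum_range_succ' _ (n + 1), sum_range_succ _ (n + 1)]
  simp only [Nat.sub_self, qnum_zero, mul_zero, Finsupp.single_zero, add_zero]
  rw [← sum_add_distrib]
  refine sum_congr rfl fun j hj => ?_
  have hjn : j ≤ n := Nat.lt_succ_iff.mp (mem_range.mp hj)
  rw [Nat.add_sub_cancel, Nat.add_sub_add_right, show n + 1 - j - 1 = n - j by omega,
    ← Finsupp.single_add]

theorem Fml_intertwines_E_general (q a b : K)
    (hqq : q - q⁻¹ ≠ 0) (hgen : ∀ i : ℕ, gq q (a * b * q⁻¹ ^ i) ≠ 0)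
    (k : ℕ) (hk : 1 ≤ k) :
    Etens q b (Fml q a b (Finsupp.single k (1 : K)))
      = qnum q k • Fml q a b (Finsupp.single (k - 1) (1 : K)) := by
  have hq : q ≠ 0 := by
    rintro rfl
    simp at hqq
  obtain ⟨n, rfl⟩ : ∃ n, k = n + 1 := ⟨k - 1, by omega⟩
  rw [Etens_Fml_single_succ, Nat.add_sub_cancel, Fml_single, smul_sum]
  refine sum_congr rfl fun j hj => ?_
  obtain ⟨m, rfl⟩ : ∃ m, n = j + m :=
    Nat.exists_eq_add_of_le (Nat.lt_succ_iff.mp (mem_range.mp hj))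
  rw [Finsupp.smul_single, smul_eq_mul, add_tsub_cancel_left,
    show j + m + 1 - j = m + 1 by omega, Fcoef_succ_mul_add_Fcoef_mul q a b hq j m (hgen _)]

/-- `F_{μ,λ}` intertwines the `E`-actions: for `k ≥ 1`,
`E(F_{μ,λ}(v_k)) = [k] F_{μ,λ}(v_{k-1})`. -/
theorem Fml_intertwines_E (q a b : K) (hq : q ≠ 0) (ha : a ≠ 0) (hb : b ≠ 0)
    (hqq : q - q⁻¹ ≠ 0) (hgen : ∀ i : ℕ, gq q (a * b * q⁻¹ ^ i) ≠ 0)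
    (k : ℕ) (hk : 1 ≤ k) :
    Etens q b (Fml q a b (Finsupp.single k (1 : K)))
      = qnum q k • Fml q a b (Finsupp.single (k - 1) (1 : K)) :=
  Fml_intertwines_E_general q a b hqq hgen k hk
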